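/- arXiv:2405.03560 — 2 statements merged into one kernel-verified Lean document; each statement's English description precedes it below -/
import Mathlib

section
/- Let τ > 0, N₁, N₂ ∈ ℕ and δ > 0. If σ₁ ∈ S_adw(τ, N₁) and σ₂ ∈ S_adw(τ, N₂), then σ₁ ⋄_δ σ₂ ∈ S_adw(τ, N₁ + N₂). In particular S∞_adw(τ) is closed under concatenation. -/
noncomputable section

/-- A switching signal over the index set `I`: a piecewise-constant right-continuous
function `toFun : [０,∞) → I` together with its set of switching instants
(`0` is counted as a switching instant; the positive switching instants are exactly
the discontinuity points of the signal, and the set of instants is locally finite). -/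
structure SwitchingSignal (I : Type*) where
  toFun : ℝ → I
  instants : Set ℝ
  zero_mem : (0 : ℝ) ∈ instants
  nonneg : ∀ t ∈ instants, (0 : ℝ) ≤ t
  finite_le : ∀ T : ℝ, (instants ∩ Set.Iic T).Finite
  const_between : ∀ s t : ℝ, 0 ≤ s → s ≤ t → instants ∩ Set.Ioc s t = ∅ → toFun s = toFun t
  jump : ∀ t ∈ instants, 0 < t → ∀ s : ℝ, 0 ≤ s → s < t → instants ∩ Set.Ioo s t = ∅ →
    toFun s ≠ toFun t

/-- `Nsw σ s t` : the number of switching instants of `σ` in the interval `[s, t)`. -/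
def Nsw {I : Type*} (σ : SwitchingSignal I) (s t : ℝ) : ℕ :=
  (σ.instants ∩ Set.Ico s t).ncard

/-- The class of `τ` dwell-time signals: any two consecutive switching instants
are at least `τ` apart. -/
def Sdw {I : Type*} (τ : ℝ) (σ : SwitchingSignal I) : Prop :=
  ∀ a b : ℝ, a ∈ σ.instants → b ∈ σ.instants → a < b →
    σ.instants ∩ Set.Ioo a b = ∅ → τ ≤ b - a

/-- The class of `(τ, N₀)` average dwell-time signals. -/
def Sadw {I : Type*} (τ : ℝ) (N₀ : ℕ) (σ : SwitchingSignal I) : Prop :=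
  ∀ s t : ℝ, 0 ≤ s → s ≤ t → (Nsw σ s t : ℝ) ≤ (N₀ : ℝ) + (t - s) / τ

/-- The class of `τ` average dwell-time signals (arbitrary chattering bound). -/
def SadwInf {I : Type*} (τ : ℝ) (σ : SwitchingSignal I) : Prop :=
  ∃ N₀ : ℕ, Sadw τ N₀ σ

/-- The class of eventually `τ`-average signals:
`limsup_{t→∞} (N_σ(0,t) - t/τ) < +∞`. -/
def Sbar {I : Type*} (τ : ℝ) (σ : SwitchingSignal I) : Prop :=
  ∃ C : ℝ, ∀ᶠ t in Filter.atTop, (Nsw σ 0 t : ℝ) - t / τ ≤ C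

/-- Class `K` comparison functions. -/
def IsClassK (α : ℝ → ℝ) : Prop :=
  ContinuousOn α (Set.Ici 0) ∧ α 0 = 0 ∧ StrictMonoOn α (Set.Ici 0)

/-- Class `K∞` comparison functions. -/
def IsClassKInf (α : ℝ → ℝ) : Prop :=
  IsClassK α ∧ ∀ M : ℝ, ∃ r : ℝ, 0 ≤ r ∧ M ≤ α r

/-- Class `KL` comparison functions. -/
def IsClassKL (β : ℝ → ℝ → ℝ) : Prop :=
  ContinuousOn (fun p : ℝ × ℝ => β p.1 p.2) (Set.Ici 0 ×ˢ Set.Ici 0) ∧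
  (∀ t : ℝ, 0 ≤ t → β 0 t = 0 ∧ StrictMonoOn (fun r => β r t) (Set.Ici 0)) ∧
  (∀ r : ℝ, 0 ≤ r → AntitoneOn (fun t => β r t) (Set.Ici 0) ∧
    Filter.Tendsto (fun t => β r t) Filter.atTop (nhds 0)) ∧
  (∀ r t : ℝ, 0 ≤ r → 0 ≤ t → 0 ≤ β r t)

/-- A (Carathéodory, forward) solution of the switched system `ẋ = f_{σ(t)}(x)`
relative to the switching signal `σ`: continuous on `[0,∞)` and at each `t ≥ 0`
right-differentiable with right derivative `f_{σ(t)}(x(t))`. -/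
def IsSolution {I : Type*} {n : ℕ}
    (f : I → EuclideanSpace ℝ (Fin n) → EuclideanSpace ℝ (Fin n))
    (σ : SwitchingSignal I) (x : ℝ → EuclideanSpace ℝ (Fin n)) : Prop :=
  ContinuousOn x (Set.Ici 0) ∧
    ∀ t : ℝ, 0 ≤ t → HasDerivWithinAt x (f (σ.toFun t) (x t)) (Set.Ici t) t

/-- A solution of the single subsystem `ẋ = f_i(x)`. -/
def IsSubSolution {I : Type*} {n : ℕ}
    (f : I → EuclideanSpace ℝ (Fin n) → EuclideanSpace ℝ (Fin n))
    (i : I) (x : ℝ → EuclideanSpace ℝ (Fin n)) : Prop :=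
  ContinuousOn x (Set.Ici 0) ∧
    ∀ t : ℝ, 0 ≤ t → HasDerivWithinAt x (f i (x t)) (Set.Ici t) t

/-- Well-posedness of the family `{f_i}`: each `f_i` vanishes at the origin and each
subsystem has a unique forward solution from every initial condition; `Φ i` is the
corresponding (semi-)flow. -/
structure WellPosed {I : Type*} {n : ℕ}
    (f : I → EuclideanSpace ℝ (Fin n) → EuclideanSpace ℝ (Fin n)) where
  zero : ∀ i, f i 0 = 0
  Φ : I → ℝ → EuclideanSpace ℝ (Fin n) → EuclideanSpace ℝ (Fin n)
  isSol : ∀ i x₀, IsSubSolution f i (fun t => Φ i t x₀)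
  init : ∀ i x₀, Φ i 0 x₀ = x₀
  unique : ∀ (i : I) (x₀ : EuclideanSpace ℝ (Fin n)) (y : ℝ → EuclideanSpace ℝ (Fin n)),
    IsSubSolution f i y → y 0 = x₀ → ∀ t : ℝ, 0 ≤ t → y t = Φ i t x₀

/-- Uniform global asymptotic stability with respect to a class of switching signals. -/
def UGAS {I : Type*} {n : ℕ}
    (f : I → EuclideanSpace ℝ (Fin n) → EuclideanSpace ℝ (Fin n))
    (Scl : SwitchingSignal I → Prop) : Prop :=
  ∃ β : ℝ → ℝ → ℝ, IsClassKL β ∧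
    ∀ σ : SwitchingSignal I, Scl σ → ∀ x : ℝ → EuclideanSpace ℝ (Fin n),
      IsSolution f σ x → ∀ t : ℝ, 0 ≤ t → ‖x t‖ ≤ β ‖x 0‖ t

/-- Uniform global exponential stability with decay `ρ`, with respect to
a class of switching signals. -/
def UGES {I : Type*} {n : ℕ}
    (f : I → EuclideanSpace ℝ (Fin n) → EuclideanSpace ℝ (Fin n))
    (ρ : ℝ) (Scl : SwitchingSignal I → Prop) : Prop :=
  ∃ M : ℝ, 0 ≤ M ∧
    ∀ σ : SwitchingSignal I, Scl σ → ∀ x : ℝ → EuclideanSpace ℝ (Fin n),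
      IsSolution f σ x → ∀ t : ℝ, 0 ≤ t → ‖x t‖ ≤ M * Real.exp (-ρ * t) * ‖x 0‖

/-- `τ`-dependent uniform global boundedness (`τ`-UGB). -/
def TauUGB {I : Type*} {n : ℕ}
    (f : I → EuclideanSpace ℝ (Fin n) → EuclideanSpace ℝ (Fin n)) (τ : ℝ) : Prop :=
  ∃ η₁ η₂ : ℝ → ℝ, ∃ α : ℝ, IsClassKInf η₁ ∧ IsClassKInf η₂ ∧ 0 ≤ α ∧
    ∀ σ : SwitchingSignal I, ∀ x : ℝ → EuclideanSpace ℝ (Fin n), IsSolution f σ x →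
      ∀ t : ℝ, 0 ≤ t →
        ‖x t‖ ≤ η₁ (Real.exp (α * τ * (Nsw σ 0 t : ℝ)) * Real.exp (-(1 + α) * t) * η₂ ‖x 0‖)

/-- `τ`-dependent uniform global exponential boundedness with decay `ρ` (`τ`-UGEB_ρ). -/
def TauUGEB {I : Type*} {n : ℕ}
    (f : I → EuclideanSpace ℝ (Fin n) → EuclideanSpace ℝ (Fin n)) (τ ρ : ℝ) : Prop :=
  ∃ M α : ℝ, 0 < M ∧ 0 ≤ α ∧
    ∀ σ : SwitchingSignal I, ∀ x : ℝ → EuclideanSpace ℝ (Fin n), IsSolution f σ x →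
      ∀ t : ℝ, 0 ≤ t →
        ‖x t‖ ≤ M * Real.exp (α * τ * (Nsw σ 0 t : ℝ)) * Real.exp (-(ρ + α) * t) * ‖x 0‖

/-- `Lip₀`: locally Lipschitz on `ℝⁿ \ {0}`. -/
def Lip0 {n : ℕ} (V : EuclideanSpace ℝ (Fin n) → ℝ) : Prop :=
  ∀ x : EuclideanSpace ℝ (Fin n), x ≠ 0 →
    ∃ (K : NNReal) (s : Set (EuclideanSpace ℝ (Fin n))), s ∈ nhds x ∧ LipschitzOnWith K V s

/-- The Dini derivative of `V` along the flow `Φi` :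
`D⁺V(x) = limsup_{h→0⁺} (V(Φi(h,x)) - V(x))/h`, with values in `EReal`. -/
def dini {n : ℕ} (Φi : ℝ → EuclideanSpace ℝ (Fin n) → EuclideanSpace ℝ (Fin n))
    (V : EuclideanSpace ℝ (Fin n) → ℝ) (x : EuclideanSpace ℝ (Fin n)) : EReal :=
  Filter.limsup (fun h : ℝ => (((V (Φi h x) - V x) / h : ℝ) : EReal))
    (nhdsWithin 0 (Set.Ioi 0))

/-- A solution of the switched linear system `ẋ = A_{σ(t)} x`. -/
def IsLinSolution {m n : ℕ} (A : Fin m → Matrix (Fin n) (Fin n) ℝ)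
    (σ : SwitchingSignal (Fin m)) (x : ℝ → EuclideanSpace ℝ (Fin n)) : Prop :=
  ContinuousOn x (Set.Ici 0) ∧
    ∀ t : ℝ, 0 ≤ t →
      HasDerivWithinAt x (Matrix.toEuclideanLin (A (σ.toFun t)) (x t)) (Set.Ici t) t

/-- UGES_ρ for the switched linear system, w.r.t. a class of switching signals. -/
def LinUGES {m n : ℕ} (A : Fin m → Matrix (Fin n) (Fin n) ℝ) (ρ : ℝ)
    (Scl : SwitchingSignal (Fin m) → Prop) : Prop :=
  ∃ M : ℝ, 0 ≤ M ∧
    ∀ σ : SwitchingSignal (Fin m), Scl σ → ∀ x : ℝ → EuclideanSpace ℝ (Fin n),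
      IsLinSolution A σ x → ∀ t : ℝ, 0 ≤ t → ‖x t‖ ≤ M * Real.exp (-ρ * t) * ‖x 0‖

/-- `τ`-UGEB_ρ for the switched linear system. -/
def LinTauUGEB {m n : ℕ} (A : Fin m → Matrix (Fin n) (Fin n) ℝ) (τ ρ : ℝ) : Prop :=
  ∃ M α : ℝ, 0 < M ∧ 0 ≤ α ∧
    ∀ σ : SwitchingSignal (Fin m), ∀ x : ℝ → EuclideanSpace ℝ (Fin n),
      IsLinSolution A σ x → ∀ t : ℝ, 0 ≤ t →
        ‖x t‖ ≤ M * Real.exp (α * τ * (Nsw σ 0 t : ℝ)) * Real.exp (-(ρ + α) * t) * ‖x 0‖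

/-- The Dini derivative of `v` along the linear flow of `A`:
`D⁺_A v(x) = limsup_{h→0⁺} (v(exp(hA)x) - v(x))/h`, with values in `EReal`. -/
def diniLin {n : ℕ} (A : Matrix (Fin n) (Fin n) ℝ)
    (v : EuclideanSpace ℝ (Fin n) → ℝ) (x : EuclideanSpace ℝ (Fin n)) : EReal :=
  Filter.limsup
    (fun h : ℝ =>
      (((v (Matrix.toEuclideanLin (NormedSpace.exp (h • A)) x) - v x) / h : ℝ) : EReal))
    (nhdsWithin 0 (Set.Ioi 0))

/-- `v : ℝⁿ → ℝ` is a norm. -/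
def IsNorm {n : ℕ} (v : EuclideanSpace ℝ (Fin n) → ℝ) : Prop :=
  (∀ x, v x = 0 ↔ x = 0) ∧
  (∀ (c : ℝ) (x : EuclideanSpace ℝ (Fin n)), v (c • x) = |c| * v x) ∧
  (∀ x y : EuclideanSpace ℝ (Fin n), v (x + y) ≤ v x + v y)

/-- `Ψ_ε(t) = min_{s ∈ [0,t]} (ρ(s) + ε (t - s))`. -/
def Psi (ε : ℝ) (ρ : ℝ → ℝ) (t : ℝ) : ℝ :=
  sInf ((fun s => ρ s + ε * (t - s)) '' Set.Icc 0 t)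

end

/-! A positive switching instant is exactly a point `u` such that `σ w ≠ σ u` for all `w` in a
left neighbourhood of `u`. This characterization is local, so the instants of the
concatenation before `δ` are instants of `σ₁` and those from `δ` on are `δ`-shifts of instants
of `σ₂`. Splitting `[s, t)` at `δ`, the counts add up and so do the bounds
`N₁ + (δ - s) / τ` and `N₂ + (t - δ) / τ`. -/

open Set Filter Topology

namespace SwitchingSignal

variable {I : Type*} (σ : SwitchingSignal I)

lemma inter_Ico_finite (s t : ℝ) : (σ.instants ∩ Ico s t).Finite :=
  (σ.finite_le t).subset fun _ hx => ⟨hx.1, hx.2.2.le⟩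

lemma exists_gap_below {u : ℝ} (hu : 0 < u) :
    ∃ p ∈ σ.instants, p < u ∧ σ.instants ∩ Ioo p u = ∅ := by
  have hfin : (σ.instants ∩ Iio u).Finite :=
    (σ.finite_le u).subset fun _ hx => ⟨hx.1, mem_Iic.2 (le_of_lt hx.2)⟩
  obtain ⟨p, ⟨hp, hpu⟩, hmax⟩ := exists_max_image _ id hfin ⟨0, σ.zero_mem, hu⟩
  refine ⟨p, hp, hpu, eq_empty_of_forall_notMem fun x ⟨hx, hpx, hxu⟩ => ?_⟩
  exact (hmax x ⟨hx, hxu⟩).not_gt hpx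

lemma mem_instants_iff {u : ℝ} (hu : 0 < u) :
    u ∈ σ.instants ↔ ∀ᶠ w in 𝓝[<] u, σ.toFun w ≠ σ.toFun u := by
  obtain ⟨p, hp, hpu, hgap⟩ := σ.exists_gap_below hu
  have hp0 : 0 ≤ p := σ.nonneg p hp
  constructor
  · intro hmem
    filter_upwards [Ioo_mem_nhdsLT hpu] with w ⟨hpw, hwu⟩
    have hconst : σ.toFun p = σ.toFun w :=
      σ.const_between p w hp0 hpw.le <| eq_empty_of_subset_empty fun x ⟨hx, hpx, hxw⟩ =>
        hgap ▸ ⟨hx, hpx, hxw.trans_lt hwu⟩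
    exact hconst ▸ σ.jump u hmem hu p hp0 hpu hgap
  · intro hne
    by_contra hmem
    have hconst : ∀ᶠ w in 𝓝[<] u, σ.toFun w = σ.toFun u := by
      filter_upwards [Ioo_mem_nhdsLT hpu] with w ⟨hpw, hwu⟩
      refine σ.const_between w u (hp0.trans hpw.le) hwu.le <|
        eq_empty_of_subset_empty fun x ⟨hx, hwx, hxu⟩ => ?_
      rcases hxu.lt_or_eq with hxu | rfl
      · exact hgap ▸ ⟨hx, hpw.trans hwx, hxu⟩
      · exact hmem hx
    exact (hne.and hconst).exists.elim fun _ h => h.1 h.2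

lemma nsw_eq_add {s m t : ℝ} (hsm : s ≤ m) (hmt : m ≤ t) :
    Nsw σ s t = Nsw σ s m + Nsw σ m t := by
  rw [Nsw, ← Ico_union_Ico_eq_Ico hsm hmt, inter_union_distrib_left]
  exact ncard_union_eq (Ico_disjoint_Ico_same.mono inter_subset_right inter_subset_right)
    (σ.inter_Ico_finite s m) (σ.inter_Ico_finite m t)

end SwitchingSignal

section Concatenation

variable {I : Type*} {τ δ : ℝ} {σ₁ σ₂ η : SwitchingSignal I}

lemma mem_instants_of_concat_left
    (hcat₁ : ∀ t : ℝ, 0 ≤ t → t < δ → η.toFun t = σ₁.toFun t)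
    {u : ℝ} (hu : u ∈ η.instants) (huδ : u < δ) : u ∈ σ₁.instants := by
  rcases (η.nonneg u hu).eq_or_lt with rfl | hu0
  · exact σ₁.zero_mem
  rw [η.mem_instants_iff hu0] at hu
  rw [σ₁.mem_instants_iff hu0, ← hcat₁ u hu0.le huδ]
  filter_upwards [hu, Ioo_mem_nhdsLT hu0] with w hw ⟨hw0, hwu⟩
  rwa [← hcat₁ w hw0.le (hwu.trans huδ)]

lemma sub_mem_instants_of_concat_right (hδ : 0 ≤ δ)
    (hcat₂ : ∀ t : ℝ, δ ≤ t → η.toFun t = σ₂.toFun (t - δ))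
    {u : ℝ} (hu : u ∈ η.instants) (hδu : δ ≤ u) : u - δ ∈ σ₂.instants := by
  rcases hδu.eq_or_lt with rfl | hδu
  · simpa using σ₂.zero_mem
  have hu0 : 0 < u - δ := sub_pos.2 hδu
  rw [η.mem_instants_iff (hδ.trans_lt hδu)] at hu
  have hshift : Tendsto (· + δ) (𝓝[<] (u - δ)) (𝓝[<] u) := by
    have := (continuous_add_const δ).continuousWithinAt.tendsto_nhdsWithin (x := u - δ)
      (s := Iio (u - δ)) (t := Iio u) fun v (hv : v < u - δ) => lt_sub_iff_add_lt.1 hv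
    rwa [sub_add_cancel] at this
  rw [σ₂.mem_instants_iff hu0, ← hcat₂ u hδu.le]
  filter_upwards [hshift.eventually hu, Ioo_mem_nhdsLT hu0] with v hv ⟨hv0, _⟩
  simpa [hcat₂ (v + δ) (by linarith)] using hv

lemma nsw_concat_le_left
    (hcat₁ : ∀ t : ℝ, 0 ≤ t → t < δ → η.toFun t = σ₁.toFun t)
    {N₁ : ℕ} (h₁ : Sadw τ N₁ σ₁) {s t : ℝ} (hs : 0 ≤ s) (hst : s ≤ t) (htδ : t ≤ δ) :
    (Nsw η s t : ℝ) ≤ N₁ + (t - s) / τ := by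
  have hsub : η.instants ∩ Ico s t ⊆ σ₁.instants ∩ Ico s t := fun u ⟨hu, hus⟩ =>
    ⟨mem_instants_of_concat_left hcat₁ hu (hus.2.trans_le htδ), hus⟩
  calc (Nsw η s t : ℝ) ≤ Nsw σ₁ s t := by
        exact_mod_cast ncard_le_ncard hsub (σ₁.inter_Ico_finite s t)
    _ ≤ N₁ + (t - s) / τ := h₁ s t hs hst

lemma nsw_concat_le_right (hδ : 0 ≤ δ)
    (hcat₂ : ∀ t : ℝ, δ ≤ t → η.toFun t = σ₂.toFun (t - δ))
    {N₂ : ℕ} (h₂ : Sadw τ N₂ σ₂) {s t : ℝ} (hδs : δ ≤ s) (hst : s ≤ t) :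
    (Nsw η s t : ℝ) ≤ N₂ + (t - s) / τ := by
  have hmaps : ∀ u ∈ η.instants ∩ Ico s t, u - δ ∈ σ₂.instants ∩ Ico (s - δ) (t - δ) :=
    fun u ⟨hu, hsu, hut⟩ => ⟨sub_mem_instants_of_concat_right hδ hcat₂ hu (hδs.trans hsu),
      sub_le_sub_right hsu δ, sub_lt_sub_right hut δ⟩
  calc (Nsw η s t : ℝ) ≤ Nsw σ₂ (s - δ) (t - δ) := by
        exact_mod_cast ncard_le_ncard_of_injOn _ hmaps (sub_left_injective.injOn)
          (σ₂.inter_Ico_finite _ _)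
    _ ≤ N₂ + (t - δ - (s - δ)) / τ := h₂ _ _ (sub_nonneg.2 hδs) (sub_le_sub_right hst δ)
    _ = N₂ + (t - s) / τ := by ring_nf

end Concatenation

theorem sadw_concat_general {I : Type*} (τ : ℝ) (N₁ N₂ : ℕ) (δ : ℝ) (hδ : 0 < δ)
    (σ₁ σ₂ η : SwitchingSignal I)
    (hcat₁ : ∀ t : ℝ, 0 ≤ t → t < δ → η.toFun t = σ₁.toFun t)
    (hcat₂ : ∀ t : ℝ, δ ≤ t → η.toFun t = σ₂.toFun (t - δ))
    (h₁ : Sadw τ N₁ σ₁) (h₂ : Sadw τ N₂ σ₂) :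
    Sadw τ (N₁ + N₂) η ∧ SadwInf τ η := by
  have hN₁ : (0 : ℝ) ≤ N₁ := N₁.cast_nonneg
  have hN₂ : (0 : ℝ) ≤ N₂ := N₂.cast_nonneg
  have key : Sadw τ (N₁ + N₂) η := by
    intro s t hs hst
    push_cast
    rcases le_total t δ with htδ | hδt
    · linarith [nsw_concat_le_left hcat₁ h₁ hs hst htδ]
    rcases le_total δ s with hδs | hsδ
    · linarith [nsw_concat_le_right hδ.le hcat₂ h₂ hδs hst]
    have hleft := nsw_concat_le_left hcat₁ h₁ hs hsδ le_rfl
    have hright := nsw_concat_le_right hδ.le hcat₂ h₂ le_rfl hδt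
    have hsplit : (t - s) / τ = (δ - s) / τ + (t - δ) / τ := by ring
    rw [η.nsw_eq_add hsδ hδt, hsplit]
    push_cast
    linarith
  exact ⟨key, N₁ + N₂, key⟩

/-- The concatenation of a `(τ,N₁)` and a `(τ,N₂)` average dwell-time signal is a
`(τ, N₁+N₂)` average dwell-time signal; in particular `S∞_adw(τ)` is closed under
concatenation. -/
theorem sadw_concat {I : Type*} (τ : ℝ) (hτ : 0 < τ) (N₁ N₂ : ℕ) (δ : ℝ) (hδ : 0 < δ)
    (σ₁ σ₂ η : SwitchingSignal I)
    (hcat₁ : ∀ t : ℝ, 0 ≤ t → t < δ → η.toFun t = σ₁.toFun t)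
    (hcat₂ : ∀ t : ℝ, δ ≤ t → η.toFun t = σ₂.toFun (t - δ))
    (h₁ : Sadw τ N₁ σ₁) (h₂ : Sadw τ N₂ σ₂) :
    Sadw τ (N₁ + N₂) η ∧ SadwInf τ η :=
  sadw_concat_general τ N₁ N₂ δ hδ σ₁ σ₂ η hcat₁ hcat₂ h₁ h₂
end

section
/- Let {f_i}_{i∈I} be well-posed. Suppose there exist α₁, α₂ ∈ K∞, ρ ∈ K, χ ∈ K∞ and V₁,…,V_m ∈ Lip₀(ℝⁿ,ℝ) such that for all i, j ∈ I and all x ∈ ℝⁿ: (a) α₁(‖x‖) ≤ V_i(x) ≤ α₂(‖x‖); (b) D⁺_{f_i}V_i(x) ≤ −ρ(V_i(x)); (c) V_i(x) ≤ χ(V_j(x)). For ε > 0 define Ψ_ε(t) := min_{s∈[0,t]} { ρ(s) + ε(t−s) }, and suppose that for some ε > 0 the quantity τ* := sup_{s>0} ∫_s^{χ(s)} dr/Ψ_ε(r) is finite. Then for every τ > τ* the switched system ẋ = f_{σ(t)}(x) is τ-UGB. -/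
/-!
Along mode `i`, the quantity `φ (V_i x)` with `φ s = ∫₁ˢ dr / Ψ_ε(r)` decreases at rate at least
`ρ(V) / Ψ_ε(V) ≥ 1`, and at a switch it grows by at most `∫_V^{χ(V)} dr / Ψ_ε ≤ τ*`; hence
`φ (V_{σ(t)} (x t)) ≤ φ (V (x 0)) + N_σ(0,t) τ* - t`. Pick `α ≥ 0` with `(1 + α) τ* ≤ α τ` and
exponentiate `(1 + α) φ`: the bound follows with `η₂ = exp ((1 + α) φ) ∘ α₂` and `η₁` the inverse of
`exp ((1 + α) φ) ∘ α₁`. These are of class `K∞` because `Ψ_ε(r) ≤ ε r` makes `φ s` lie below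
`ε⁻¹ log s` near `0` and above it near `∞`.
-/

open Set Filter Topology Real

section ComparisonFunctions

variable {α β θ : ℝ → ℝ}

theorem IsClassK.pos (hα : IsClassK α) {r : ℝ} (hr : 0 < r) : 0 < α r :=
  hα.2.1 ▸ hα.2.2 (mem_Ici.2 le_rfl) hr.le hr

theorem IsClassK.nonneg (hα : IsClassK α) {r : ℝ} (hr : 0 ≤ r) : 0 ≤ α r :=
  hr.eq_or_lt.elim (fun h => h ▸ hα.2.1.ge) fun h => (hα.pos h).le

theorem IsClassKInf.comp (hβ : IsClassKInf β) (hα : IsClassKInf α) : IsClassKInf (β ∘ α) := by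
  have hmaps : MapsTo α (Ici 0) (Ici 0) := fun r hr => hα.1.nonneg hr
  refine ⟨⟨hβ.1.1.comp hα.1.1 hmaps, by simp [hα.1.2.1, hβ.1.2.1],
    hβ.1.2.2.comp hα.1.2.2 hmaps⟩, fun M => ?_⟩
  obtain ⟨s, hs, hMs⟩ := hβ.2 M
  obtain ⟨r, hr, hsr⟩ := hα.2 s
  exact ⟨r, hr, hMs.trans (hβ.1.2.2.monotoneOn hs (hmaps hr) hsr)⟩

theorem IsClassKInf.exists_leftInverse (hθ : IsClassKInf θ) :
    ∃ η, IsClassKInf η ∧ ∀ r, 0 ≤ r → η (θ r) = r := by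
  obtain ⟨hK, hunb⟩ := hθ
  -- extended by the identity on `(-∞, 0)`, `θ` becomes an order automorphism of `ℝ`
  set e : ℝ → ℝ := fun r => if 0 ≤ r then θ r else r
  have he : ∀ r, 0 ≤ r → e r = θ r := fun r hr => if_pos hr
  have hmono : StrictMono e := by
    intro a b hab
    rcases le_or_gt 0 a with ha | ha
    · rw [he a ha, he b (ha.trans hab.le)]
      exact hK.2.2 ha (ha.trans hab.le) hab
    rcases le_or_gt 0 b with hb | hb
    · rw [he b hb, show e a = a from if_neg ha.not_ge]
      exact ha.trans_le (hK.nonneg hb)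
    · simpa [e, ha.not_ge, hb.not_ge] using hab
  have hsurj : Function.Surjective e := by
    intro y
    rcases lt_or_ge y 0 with hy | hy
    · exact ⟨y, if_neg hy.not_ge⟩
    obtain ⟨R, hR, hyR⟩ := hunb y
    obtain ⟨r, hr, rfl⟩ :=
      intermediate_value_Icc hR (hK.1.mono Icc_subset_Ici_self) ⟨hK.2.1.symm ▸ hy, hyR⟩
    exact ⟨r, he r hr.1⟩
  set E := StrictMono.orderIsoOfSurjective e hmono hsurj
  have hinv : ∀ r, 0 ≤ r → E.symm (θ r) = r := fun r hr => by
    rw [← he r hr]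
    exact E.symm_apply_apply r
  refine ⟨E.symm, ⟨⟨E.symm.continuous.continuousOn, ?_, E.symm.strictMono.strictMonoOn _⟩,
    fun M => ⟨θ (max M 0), hK.nonneg (le_max_right M 0), ?_⟩⟩, hinv⟩
  · simpa [hK.2.1] using hinv 0 le_rfl
  · rw [hinv _ (le_max_right M 0)]
    exact le_max_left M 0

theorem isClassKInf_indicator_exp {g : ℝ → ℝ} (hgc : ContinuousOn g (Ioi 0))
    (hgm : StrictMonoOn g (Ioi 0)) (hg0 : Tendsto g (𝓝[>] 0) atBot)
    (hgt : Tendsto g atTop atTop) : IsClassKInf ((Ioi 0).indicator fun s => exp (g s)) := by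
  set G := (Ioi 0).indicator fun s => exp (g s)
  have hG : EqOn G (exp ∘ g) (Ioi 0) := fun s hs => indicator_of_mem hs _
  have hG0 : G 0 = 0 := indicator_of_notMem (lt_irrefl 0) _
  have hGc : ContinuousOn G (Ioi 0) := (continuous_exp.comp_continuousOn hgc).congr hG
  refine ⟨⟨fun r hr => ?_, hG0, fun a ha b hb hab => ?_⟩, fun M => ?_⟩
  · rcases (mem_Ici.1 hr).eq_or_lt with rfl | hr
    · refine continuousWithinAt_Ioi_iff_Ici.1 ?_
      rw [ContinuousWithinAt, hG0]
      exact (tendsto_exp_atBot.comp hg0).congr' (eventuallyEq_nhdsWithin_of_eqOn hG).symm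
    · exact (hGc.continuousAt (Ioi_mem_nhds hr)).continuousWithinAt
  · have hb' : b ∈ Ioi 0 := (mem_Ici.1 ha).trans_lt hab
    rw [hG hb']
    rcases (mem_Ici.1 ha).eq_or_lt with rfl | ha'
    · rw [hG0]
      exact exp_pos _
    · rw [hG ha']
      exact exp_lt_exp.2 (hgm ha' hb' hab)
  · obtain ⟨r, hMr, hr⟩ :=
      (((tendsto_exp_atTop.comp hgt).eventually_ge_atTop M).and (eventually_gt_atTop 0)).exists
    exact ⟨r, hr.le, by rwa [hG hr]⟩

end ComparisonFunctions

section Psi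

variable {ε : ℝ} {ρ : ℝ → ℝ}

theorem Psi_le (hε : 0 ≤ ε) (hρ : IsClassK ρ) {s t : ℝ} (hs : s ∈ Icc 0 t) :
    Psi ε ρ t ≤ ρ s + ε * (t - s) :=
  csInf_le ⟨0, forall_mem_image.2 fun _ hu =>
    add_nonneg (hρ.nonneg hu.1) (mul_nonneg hε (sub_nonneg.2 hu.2))⟩ (mem_image_of_mem _ hs)

theorem le_Psi {t c : ℝ} (ht : 0 ≤ t) (h : ∀ s ∈ Icc 0 t, c ≤ ρ s + ε * (t - s)) :
    c ≤ Psi ε ρ t :=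
  le_csInf ((nonempty_Icc.2 ht).image _) (forall_mem_image.2 h)

theorem Psi_le_self (hε : 0 ≤ ε) (hρ : IsClassK ρ) {t : ℝ} (ht : 0 ≤ t) : Psi ε ρ t ≤ ρ t := by
  simpa using Psi_le hε hρ (right_mem_Icc.2 ht)

theorem Psi_le_mul (hε : 0 ≤ ε) (hρ : IsClassK ρ) {t : ℝ} (ht : 0 ≤ t) : Psi ε ρ t ≤ ε * t := by
  simpa [hρ.2.1] using Psi_le hε hρ (left_mem_Icc.2 ht)

theorem Psi_pos (hε : 0 < ε) (hρ : IsClassK ρ) {t : ℝ} (ht : 0 < t) : 0 < Psi ε ρ t := by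
  refine (lt_min (hρ.pos (half_pos ht)) (mul_pos hε (half_pos ht))).trans_le (le_Psi ht.le ?_)
  rintro s ⟨hs0, hst⟩
  rcases le_or_gt s (t / 2) with hs | hs
  · have : ε * (t / 2) ≤ ε * (t - s) := by gcongr; linarith
    linarith [min_le_right (ρ (t / 2)) (ε * (t / 2)), hρ.nonneg hs0]
  · have : ρ (t / 2) ≤ ρ s := hρ.2.2.monotoneOn (half_pos ht).le hs0 hs.le
    linarith [min_le_left (ρ (t / 2)) (ε * (t / 2)), mul_nonneg hε.le (sub_nonneg.2 hst)]

theorem Psi_monotoneOn (hε : 0 ≤ ε) (hρ : IsClassK ρ) : MonotoneOn (Psi ε ρ) (Ici 0) := by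
  intro s hs t _ hst
  refine le_Psi (hs.trans hst) fun u ⟨hu0, hut⟩ => ?_
  rcases le_total u s with hus | hsu
  · have : ε * (s - u) ≤ ε * (t - u) := by gcongr
    linarith [Psi_le hε hρ ⟨hu0, hus⟩]
  · linarith [Psi_le_self hε hρ hs, hρ.2.2.monotoneOn hs hu0 hsu,
      mul_nonneg hε (sub_nonneg.2 hut)]

theorem Psi_le_add_mul (hε : 0 ≤ ε) (hρ : IsClassK ρ) {s t : ℝ} (hs : 0 ≤ s) (hst : s ≤ t) :
    Psi ε ρ t ≤ Psi ε ρ s + ε * (t - s) := by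
  suffices Psi ε ρ t - ε * (t - s) ≤ Psi ε ρ s by linarith
  refine le_Psi hs fun u ⟨hu0, hus⟩ => ?_
  linarith [Psi_le hε hρ ⟨hu0, hus.trans hst⟩]

theorem Psi_lipschitzOnWith (hε : 0 ≤ ε) (hρ : IsClassK ρ) :
    LipschitzOnWith (Real.toNNReal ε) (Psi ε ρ) (Ici 0) := by
  refine LipschitzOnWith.of_le_add_mul' ε fun s hs t ht => ?_
  rw [Real.dist_eq]
  rcases le_total s t with hst | hts
  · linarith [Psi_monotoneOn hε hρ hs ht hst, mul_nonneg hε (abs_nonneg (s - t))]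
  · rw [abs_of_nonneg (sub_nonneg.2 hts)]
    exact Psi_le_add_mul hε hρ ht hts

end Psi

section IntegralInvPsi

variable {ε : ℝ} {ρ : ℝ → ℝ}

-- Only meaningful for `s > 0`: `1 / Ψ_ε` is not integrable at `0`.
noncomputable def integralInvPsi (ε : ℝ) (ρ : ℝ → ℝ) (s : ℝ) : ℝ :=
  ∫ r in (1 : ℝ)..s, (Psi ε ρ r)⁻¹

theorem continuousOn_inv_Psi (hε : 0 < ε) (hρ : IsClassK ρ) :
    ContinuousOn (fun r => (Psi ε ρ r)⁻¹) (Ioi 0) :=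
  ((Psi_lipschitzOnWith hε.le hρ).continuousOn.mono Ioi_subset_Ici_self).inv₀
    fun _ hr => (Psi_pos hε hρ hr).ne'

theorem intervalIntegrable_inv_Psi (hε : 0 < ε) (hρ : IsClassK ρ) {a b : ℝ} (ha : 0 < a)
    (hb : 0 < b) : IntervalIntegrable (fun r => (Psi ε ρ r)⁻¹) MeasureTheory.volume a b :=
  ((continuousOn_inv_Psi hε hρ).mono
    ((Icc_subset_Ioi_iff inf_le_sup).2 (lt_min ha hb))).intervalIntegrable

theorem integralInvPsi_sub (hε : 0 < ε) (hρ : IsClassK ρ) {a b : ℝ} (ha : 0 < a) (hb : 0 < b) :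
    integralInvPsi ε ρ b - integralInvPsi ε ρ a = ∫ r in a..b, (Psi ε ρ r)⁻¹ :=
  intervalIntegral.integral_interval_sub_left (intervalIntegrable_inv_Psi hε hρ one_pos hb)
    (intervalIntegrable_inv_Psi hε hρ one_pos ha)

theorem hasDerivAt_integralInvPsi (hε : 0 < ε) (hρ : IsClassK ρ) {s : ℝ} (hs : 0 < s) :
    HasDerivAt (integralInvPsi ε ρ) (Psi ε ρ s)⁻¹ s :=
  intervalIntegral.integral_hasDerivAt_right (intervalIntegrable_inv_Psi hε hρ one_pos hs)
    ((continuousOn_inv_Psi hε hρ).stronglyMeasurableAtFilter isOpen_Ioi s hs)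
    ((continuousOn_inv_Psi hε hρ).continuousAt (Ioi_mem_nhds hs))

theorem continuousOn_integralInvPsi (hε : 0 < ε) (hρ : IsClassK ρ) :
    ContinuousOn (integralInvPsi ε ρ) (Ioi 0) := fun _ hs =>
  (hasDerivAt_integralInvPsi hε hρ hs).continuousAt.continuousWithinAt

theorem integralInvPsi_strictMonoOn (hε : 0 < ε) (hρ : IsClassK ρ) :
    StrictMonoOn (integralInvPsi ε ρ) (Ioi 0) := by
  intro a ha b hb hab
  have hpos : 0 < ∫ r in a..b, (Psi ε ρ r)⁻¹ :=
    intervalIntegral.intervalIntegral_pos_of_pos_on (intervalIntegrable_inv_Psi hε hρ ha hb)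
      (fun r hr => inv_pos.2 (Psi_pos hε hρ (mem_Ioi.1 ha |>.trans hr.1))) hab
  linarith [integralInvPsi_sub hε hρ ha hb]

theorem log_sub_le_integralInvPsi_sub (hε : 0 < ε) (hρ : IsClassK ρ) {a b : ℝ} (ha : 0 < a)
    (hab : a ≤ b) :
    ε⁻¹ * (log b - log a) ≤ integralInvPsi ε ρ b - integralInvPsi ε ρ a := by
  have hb := ha.trans_le hab
  have hint : ∫ r in a..b, ε⁻¹ * r⁻¹ = ε⁻¹ * (log b - log a) := by
    rw [intervalIntegral.integral_const_mul, integral_inv_of_pos ha hb, log_div hb.ne' ha.ne']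
  rw [integralInvPsi_sub hε hρ ha hb, ← hint]
  refine intervalIntegral.integral_mono_on hab
    ((continuousOn_const.mul (continuousOn_inv₀.mono fun r hr =>
      (ha.trans_le hr.1).ne')).intervalIntegrable_of_Icc hab)
    (intervalIntegrable_inv_Psi hε hρ ha hb) fun r hr => ?_
  have hr : 0 < r := ha.trans_le hr.1
  rw [← mul_inv]
  exact inv_anti₀ (Psi_pos hε hρ hr) (Psi_le_mul hε.le hρ hr.le)

theorem tendsto_integralInvPsi_atTop (hε : 0 < ε) (hρ : IsClassK ρ) :
    Tendsto (integralInvPsi ε ρ) atTop atTop := by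
  refine tendsto_atTop_mono' _ ?_ (tendsto_log_atTop.const_mul_atTop (inv_pos.2 hε))
  filter_upwards [eventually_ge_atTop 1] with s hs
  simpa [integralInvPsi] using log_sub_le_integralInvPsi_sub hε hρ one_pos hs

theorem tendsto_integralInvPsi_nhdsGT_zero (hε : 0 < ε) (hρ : IsClassK ρ) :
    Tendsto (integralInvPsi ε ρ) (𝓝[>] 0) atBot := by
  refine tendsto_atBot_mono' _ ?_ (tendsto_log_nhdsGT_zero.const_mul_atBot (inv_pos.2 hε))
  filter_upwards [Ioo_mem_nhdsGT one_pos] with s hs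
  simpa [integralInvPsi] using log_sub_le_integralInvPsi_sub hε hρ hs.1 hs.2.le

theorem isClassKInf_indicator_exp_integralInvPsi (hε : 0 < ε) (hρ : IsClassK ρ) {β : ℝ}
    (hβ : 0 < β) :
    IsClassKInf ((Ioi 0).indicator fun s => exp (β * integralInvPsi ε ρ s)) :=
  isClassKInf_indicator_exp (continuousOn_const.mul (continuousOn_integralInvPsi hε hρ))
    (fun _ ha _ hb hab => mul_lt_mul_of_pos_left (integralInvPsi_strictMonoOn hε hρ ha hb hab) hβ)
    ((tendsto_integralInvPsi_nhdsGT_zero hε hρ).const_mul_atBot hβ)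
    ((tendsto_integralInvPsi_atTop hε hρ).const_mul_atTop hβ)

theorem integralInvPsi_le_add_of_le_chi {χ : ℝ → ℝ} {τstar : ℝ} (hε : 0 < ε) (hρ : IsClassK ρ)
    (hχ : IsClassK χ) (hsup : ∀ s : ℝ, 0 < s → (∫ r in s..(χ s), (Psi ε ρ r)⁻¹) ≤ τstar)
    {v w : ℝ} (hv : 0 < v) (hw : 0 < w) (hwv : w ≤ χ v) :
    integralInvPsi ε ρ w ≤ integralInvPsi ε ρ v + τstar := by
  have hχv := hχ.pos hv
  have := (integralInvPsi_strictMonoOn hε hρ).monotoneOn hw hχv hwv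
  linarith [integralInvPsi_sub hε hρ hv hχv, hsup v hv]

end IntegralInvPsi

theorem tendsto_sub_const_nhdsGT (s : ℝ) : Tendsto (fun z => z - s) (𝓝[>] s) (𝓝[>] 0) :=
  tendsto_nhdsWithin_iff.2
    ⟨by simpa using ((continuous_sub_right s).tendsto s).mono_left nhdsWithin_le_nhds,
      eventually_mem_nhdsWithin.mono fun _ hz => mem_Ioi.2 (sub_pos.2 hz)⟩

/-- A chain rule for upper right Dini derivatives. -/
theorem HasDerivAt.eventually_slope_comp_lt {φ w : ℝ → ℝ} {s L c r : ℝ}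
    (hφ : HasDerivAt φ L (w s)) (hL : 0 < L) (hw : ContinuousWithinAt w (Ioi s) s)
    (hc : c < 0) (hwc : ∀ᶠ z in 𝓝[>] s, slope w s z < c) (hr : L * c < r) :
    ∀ᶠ z in 𝓝[>] s, slope (φ ∘ w) s z < r := by
  have hne : ∀ᶠ z in 𝓝[>] s, w z ≠ w s := by
    filter_upwards [hwc, self_mem_nhdsWithin] with z hz (hsz : s < z) hzs
    rw [slope_def_field, hzs, sub_self, zero_div] at hz
    exact hc.not_gt hz
  have hslope : Tendsto (fun z => slope φ (w s) (w z)) (𝓝[>] s) (𝓝 L) :=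
    (hasDerivAt_iff_tendsto_slope.1 hφ).comp (tendsto_nhdsWithin_iff.2 ⟨hw, hne⟩)
  filter_upwards [hwc, hne, hslope.eventually (lt_mem_nhds hL),
    (hslope.mul_const c).eventually (eventually_lt_nhds hr)] with z hz hzs hpos hlt
  have hchain : slope (φ ∘ w) s z = slope φ (w s) (w z) * slope w s z := by
    simp only [slope_def_field, Function.comp_apply]
    rw [div_mul_div_cancel₀ (sub_ne_zero.2 hzs)]
  rw [hchain]
  nlinarith

theorem HasDerivWithinAt.comp_add_const_Ici {E : Type*} [NormedAddCommGroup E]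
    [NormedSpace ℝ E] {g : ℝ → E} {g' : E} {s c : ℝ}
    (h : HasDerivWithinAt g g' (Ici (s + c)) (s + c)) :
    HasDerivWithinAt (fun t => g (t + c)) g' (Ici s) s := by
  simpa [Function.comp_def] using h.scomp s ((hasDerivWithinAt_id s _).add_const c)
    fun _ ht => by simpa using ht

section Flow

variable {I : Type*} {n : ℕ} {f : I → EuclideanSpace ℝ (Fin n) → EuclideanSpace ℝ (Fin n)}

namespace WellPosed

variable (F : WellPosed f)

theorem flow_zero (i : I) {t : ℝ} (ht : 0 ≤ t) : F.Φ i t 0 = 0 := by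
  refine (F.unique i 0 _ ⟨continuousOn_const, fun t _ => ?_⟩ rfl t ht).symm
  simpa [F.zero i] using hasDerivWithinAt_const t (Ici t) (0 : EuclideanSpace ℝ (Fin n))

theorem isSubSolution_flow_add_const (i : I) (x₀ : EuclideanSpace ℝ (Fin n)) {s : ℝ}
    (hs : 0 ≤ s) : IsSubSolution f i (fun t => F.Φ i (t + s) x₀) :=
  ⟨(F.isSol i x₀).1.comp (continuous_add_const s).continuousOn
      fun _ ht => add_nonneg (mem_Ici.1 ht) hs,
    fun t ht => ((F.isSol i x₀).2 (t + s) (add_nonneg ht hs)).comp_add_const_Ici⟩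

theorem flow_add (i : I) (x₀ : EuclideanSpace ℝ (Fin n)) {s t : ℝ} (hs : 0 ≤ s) (ht : 0 ≤ t) :
    F.Φ i (t + s) x₀ = F.Φ i t (F.Φ i s x₀) :=
  F.unique i _ _ (F.isSubSolution_flow_add_const i x₀ hs) (by simp) t ht

theorem flow_ne_zero_of_le (i : I) {x₀ : EuclideanSpace ℝ (Fin n)} {s t : ℝ} (hs : 0 ≤ s)
    (hst : s ≤ t) (ht : F.Φ i t x₀ ≠ 0) : F.Φ i s x₀ ≠ 0 := fun h0 =>
  ht (by rw [← sub_add_cancel t s, F.flow_add i x₀ hs (sub_nonneg.2 hst), h0,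
    F.flow_zero i (sub_nonneg.2 hst)])

theorem eq_flow_of_hasDerivWithinAt {i : I} {y : ℝ → EuclideanSpace ℝ (Fin n)} {M : ℝ}
    (hM : 0 ≤ M) (hc : ContinuousOn y (Icc 0 M))
    (hd : ∀ s ∈ Ico 0 M, HasDerivWithinAt y (f i (y s)) (Ici s) s) :
    ∀ s ∈ Icc 0 M, y s = F.Φ i s (y 0) := by
  -- continue `y` beyond `M` by the flow, so that the uniqueness of `F` applies
  set z := fun s => if s ≤ M then y s else F.Φ i (s + -M) (y M)
  have hzy : EqOn z y (Icc 0 M) := fun s hs => if_pos hs.2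
  have hzΦ : EqOn z (fun s => F.Φ i (s + -M) (y M)) (Ici M) := by
    intro s hs
    rcases (mem_Ici.1 hs).eq_or_lt with rfl | hlt
    · simp [z, F.init]
    · exact if_neg hlt.not_ge
  have hsol : IsSubSolution f i z := by
    refine ⟨?_, fun s hs => ?_⟩
    · rw [← Icc_union_Ici_eq_Ici hM]
      refine (hc.congr hzy).union_of_isClosed (ContinuousOn.congr ?_ hzΦ) isClosed_Icc isClosed_Ici
      exact (F.isSol i (y M)).1.comp (continuous_add_const _).continuousOn
        fun t ht => mem_Ici.2 (by linarith [mem_Ici.1 ht])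
    · rcases lt_or_ge s M with hsM | hMs
      · rw [hzy ⟨hs, hsM.le⟩]
        exact (hd s ⟨hs, hsM⟩).congr_of_eventuallyEq (mem_of_superset (Icc_mem_nhdsGE hsM)
          fun t ht => hzy ⟨hs.trans ht.1, ht.2⟩) (hzy ⟨hs, hsM.le⟩)
      · rw [hzΦ hMs]
        exact ((F.isSol i (y M)).2 (s + -M) (by linarith)).comp_add_const_Ici.congr
          (fun t ht => hzΦ (hMs.trans ht)) (hzΦ hMs)
  exact fun s hs => (hzy hs).symm.trans (F.unique i _ z hsol (hzy ⟨le_rfl, hM⟩) s hs.1)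

end WellPosed

end Flow

namespace SwitchingSignal

variable {I : Type*} (σ : SwitchingSignal I)

theorem Nsw_self (s : ℝ) : Nsw σ s s = 0 := by
  simp [Nsw]

theorem exists_last_instant {u : ℝ} (hu : 0 < u) :
    ∃ a, 0 ≤ a ∧ a < u ∧ σ.instants ∩ Ioo a u = ∅ ∧ Nsw σ 0 u = Nsw σ 0 a + 1 := by
  have hfin : ∀ t, (σ.instants ∩ Ico 0 t).Finite := fun t =>
    (σ.finite_le t).subset (inter_subset_inter_right _ fun _ h => mem_Iic.2 h.2.le)
  obtain ⟨a, ⟨ha, ha0, hau⟩, hmax⟩ :=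
    Set.exists_max_image _ id (hfin u) ⟨0, σ.zero_mem, le_rfl, hu⟩
  have hsplit : σ.instants ∩ Ico 0 u = insert a (σ.instants ∩ Ico 0 a) := by
    ext t
    simp only [mem_insert_iff, mem_inter_iff, mem_Ico]
    constructor
    · rintro ⟨ht, ht0, htu⟩
      rcases (hmax t ⟨ht, ht0, htu⟩).eq_or_lt with h | h
      · exact Or.inl h
      · exact Or.inr ⟨ht, ht0, h⟩
    · rintro (rfl | ⟨ht, ht0, hta⟩)
      · exact ⟨ha, ha0, hau⟩
      · exact ⟨ht, ht0, hta.trans hau⟩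
  refine ⟨a, ha0, hau, eq_empty_iff_forall_notMem.2 fun t ⟨ht, hat, htu⟩ =>
    (hmax t ⟨ht, ha0.trans hat.le, htu⟩).not_gt hat, ?_⟩
  rw [Nsw, Nsw, hsplit, ncard_insert_of_notMem (fun h => lt_irrefl a h.2.2) (hfin a)]

theorem induction_nonneg {P : ℝ → Prop} (h0 : P 0)
    (step : ∀ a u, 0 ≤ a → a < u → σ.instants ∩ Ioo a u = ∅ →
      Nsw σ 0 u = Nsw σ 0 a + 1 → P a → P u) {u : ℝ} (hu : 0 ≤ u) : P u := by
  suffices ∀ N : ℕ, ∀ u, 0 ≤ u → Nsw σ 0 u = N → P u from this _ u hu rfl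
  intro N
  induction N with
  | zero =>
    intro u hu hN
    rcases hu.eq_or_lt with rfl | hu
    · exact h0
    · obtain ⟨a, -, -, -, ha⟩ := σ.exists_last_instant hu
      omega
  | succ k ih =>
    intro u hu hN
    rcases hu.eq_or_lt with rfl | hu
    · simp [Nsw_self] at hN
    · obtain ⟨a, ha, hau, hgap, hNa⟩ := σ.exists_last_instant hu
      exact step a u ha hau hgap hNa (ih a ha (by omega))

end SwitchingSignal

namespace WellPosed

variable {I : Type*} {n : ℕ} {f : I → EuclideanSpace ℝ (Fin n) → EuclideanSpace ℝ (Fin n)}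
  (F : WellPosed f) {ε : ℝ} {ρ : ℝ → ℝ}

theorem eq_flow_of_isSolution {σ : SwitchingSignal I} {x : ℝ → EuclideanSpace ℝ (Fin n)}
    (hx : IsSolution f σ x) {a b : ℝ} (ha : 0 ≤ a) (hab : a ≤ b)
    (hgap : σ.instants ∩ Ioo a b = ∅) :
    ∀ u ∈ Icc a b, x u = F.Φ (σ.toFun a) (u - a) (x a) := by
  have hmode : ∀ t ∈ Ico a b, σ.toFun t = σ.toFun a := fun t ht =>
    (σ.const_between a t ha ht.1 (subset_empty_iff.1 <|
      hgap ▸ inter_subset_inter_right _ (Ioc_subset_Ioo_right ht.2))).symm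
  have hflow := F.eq_flow_of_hasDerivWithinAt (i := σ.toFun a) (y := fun s => x (s + a))
    (sub_nonneg.2 hab)
    (hx.1.comp (continuous_add_const a).continuousOn fun s hs => mem_Ici.2 (by linarith [hs.1]))
    fun s hs => by
      rw [← hmode (s + a) ⟨by linarith [hs.1], by linarith [hs.2]⟩]
      exact (hx.2 (s + a) (by linarith [hs.1])).comp_add_const_Ici
  intro u hu
  simpa using hflow (u - a) ⟨sub_nonneg.2 hu.1, by linarith [hu.2]⟩

theorem eventually_slope_lt_of_dini_lt (i : I) {W : EuclideanSpace ℝ (Fin n) → ℝ}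
    {x₀ : EuclideanSpace ℝ (Fin n)} {s c : ℝ} (hs : 0 ≤ s)
    (h : dini (F.Φ i) W (F.Φ i s x₀) < c) :
    ∀ᶠ z in 𝓝[>] s, slope (fun t => W (F.Φ i t x₀)) s z < c := by
  filter_upwards [(tendsto_sub_const_nhdsGT s).eventually (eventually_lt_of_limsup_lt h),
    self_mem_nhdsWithin] with z hz (hsz : s < z)
  have hshift : F.Φ i z x₀ = F.Φ i (z - s) (F.Φ i s x₀) := by
    simpa using F.flow_add i x₀ hs (sub_nonneg.2 hsz.le)
  rw [slope_def_field, hshift]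
  exact_mod_cast hz

theorem integralInvPsi_comp_flow_le (hε : 0 < ε) (hρ : IsClassK ρ) (i : I)
    {W : EuclideanSpace ℝ (Fin n) → ℝ} (hWc : ∀ y, y ≠ 0 → ContinuousAt W y)
    (hWpos : ∀ y, y ≠ 0 → 0 < W y) (hdec : ∀ y, dini (F.Φ i) W y ≤ ((-(ρ (W y)) : ℝ) : EReal))
    {x₀ : EuclideanSpace ℝ (Fin n)} {T : ℝ} (hT : 0 ≤ T) (hxT : F.Φ i T x₀ ≠ 0) :
    integralInvPsi ε ρ (W (F.Φ i T x₀)) ≤ integralInvPsi ε ρ (W x₀) - T := by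
  set w := fun t => W (F.Φ i t x₀)
  have hne : ∀ s ∈ Icc 0 T, F.Φ i s x₀ ≠ 0 := fun s hs => F.flow_ne_zero_of_le i hs.1 hs.2 hxT
  have hwc : ∀ s ∈ Icc 0 T, ContinuousWithinAt w (Ici 0) s := fun s hs =>
    (hWc _ (hne s hs)).comp_continuousWithinAt (f := fun t => F.Φ i t x₀) ((F.isSol i x₀).1 s hs.1)
  have hgc : ContinuousOn (integralInvPsi ε ρ ∘ w) (Icc 0 T) := fun s hs =>
    ((continuousOn_integralInvPsi hε hρ).continuousAt (Ioi_mem_nhds (hWpos _ (hne s hs)))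
      ).comp_continuousWithinAt (f := w) ((hwc s hs).mono Icc_subset_Ici_self)
  have hslope : ∀ s ∈ Ico 0 T, ∀ r, -1 < r →
      ∃ᶠ z in 𝓝[>] s, slope (integralInvPsi ε ρ ∘ w) s z < r := by
    intro s hs r hr
    have hv := hWpos _ (hne s (Ico_subset_Icc_self hs))
    have hΨ := Psi_pos hε hρ hv
    -- `Ψ ≤ ρ`, so the rate `ρ / Ψ` at which `integralInvPsi ∘ w` decreases is at least `1`
    obtain ⟨c, hρc, hc⟩ : ∃ c, -ρ (w s) < c ∧ c < min 0 (r * Psi ε ρ (w s)) :=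
      exists_between (lt_min (neg_lt_zero.2 (hρ.pos hv))
        (by nlinarith [Psi_le_self hε.le hρ hv.le, mul_pos (neg_lt_iff_pos_add.1 hr) hΨ]))
    refine (HasDerivAt.eventually_slope_comp_lt (hasDerivAt_integralInvPsi hε hρ hv)
      (inv_pos.2 hΨ) ((hwc s (Ico_subset_Icc_self hs)).mono fun z hz => hs.1.trans hz.le)
      (hc.trans_le (min_le_left _ _))
      (F.eventually_slope_lt_of_dini_lt i hs.1 ((hdec _).trans_lt (by exact_mod_cast hρc)))
      ?_).frequently
    rw [inv_mul_lt_iff₀ hΨ]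
    linarith [min_le_right 0 (r * Psi ε ρ (w s))]
  have := image_le_of_liminf_slope_right_le_deriv_boundary hgc
    (B := fun t => (integralInvPsi ε ρ ∘ w) 0 - t) (B' := fun _ => -1) (by simp)
    (continuous_const.sub continuous_id).continuousOn
    (fun s _ => (hasDerivWithinAt_id s _).const_sub _) hslope ⟨hT, le_rfl⟩
  simpa [w, F.init] using this

end WellPosed

theorem WellPosed.integralInvPsi_le_of_isSolution {I : Type*} {n : ℕ}
    {f : I → EuclideanSpace ℝ (Fin n) → EuclideanSpace ℝ (Fin n)} (F : WellPosed f)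
    {V : I → EuclideanSpace ℝ (Fin n) → ℝ} {ρ χ : ℝ → ℝ} {ε τstar : ℝ}
    (hε : 0 < ε) (hρ : IsClassK ρ) (hχ : IsClassK χ)
    (hVc : ∀ i y, y ≠ 0 → ContinuousAt (V i) y) (hVpos : ∀ i y, y ≠ 0 → 0 < V i y)
    (hdec : ∀ i x, dini (F.Φ i) (V i) x ≤ ((-(ρ (V i x)) : ℝ) : EReal))
    (hjump : ∀ i j x, V i x ≤ χ (V j x))
    (hsup : ∀ s : ℝ, 0 < s → (∫ r in s..(χ s), (Psi ε ρ r)⁻¹) ≤ τstar)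
    {σ : SwitchingSignal I} {x : ℝ → EuclideanSpace ℝ (Fin n)} (hx : IsSolution f σ x)
    {u : ℝ} (hu : 0 ≤ u) (hxu : x u ≠ 0) :
    x 0 ≠ 0 ∧ integralInvPsi ε ρ (V (σ.toFun u) (x u)) ≤
      integralInvPsi ε ρ (V (σ.toFun 0) (x 0)) + Nsw σ 0 u * τstar - u := by
  refine σ.induction_nonneg (P := fun u => x u ≠ 0 → x 0 ≠ 0 ∧ integralInvPsi ε ρ
      (V (σ.toFun u) (x u)) ≤ integralInvPsi ε ρ (V (σ.toFun 0) (x 0)) + Nsw σ 0 u * τstar - u)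
    (fun hx0 => ⟨hx0, by simp [σ.Nsw_self]⟩) (fun a u ha hau hgap hN IH hxu => ?_) hu hxu
  set i := σ.toFun a
  have hxu' : x u = F.Φ i (u - a) (x a) :=
    F.eq_flow_of_isSolution hx ha hau.le hgap u ⟨hau.le, le_rfl⟩
  have hxa : x a ≠ 0 := fun h => hxu (by rw [hxu', h, F.flow_zero i (sub_nonneg.2 hau.le)])
  obtain ⟨hx0, hIH⟩ := IH hxa
  have hflow : integralInvPsi ε ρ (V i (x u)) ≤ integralInvPsi ε ρ (V i (x a)) - (u - a) := by
    rw [hxu'] at hxu ⊢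
    exact F.integralInvPsi_comp_flow_le hε hρ i (hVc i) (hVpos i) (hdec i) (sub_nonneg.2 hau.le) hxu
  have hswitch :
      integralInvPsi ε ρ (V (σ.toFun u) (x u)) ≤ integralInvPsi ε ρ (V i (x u)) + τstar :=
    integralInvPsi_le_add_of_le_chi hε hρ hχ hsup (hVpos _ _ hxu) (hVpos _ _ hxu) (hjump _ _ _)
  refine ⟨hx0, ?_⟩
  rw [hN]
  push_cast
  linarith

theorem Lip0.continuousAt {n : ℕ} {V : EuclideanSpace ℝ (Fin n) → ℝ} (hV : Lip0 V)
    {y : EuclideanSpace ℝ (Fin n)} (hy : y ≠ 0) : ContinuousAt V y := by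
  obtain ⟨K, s, hs, hK⟩ := hV y hy
  exact (hK.continuousOn y (mem_of_mem_nhds hs)).continuousAt hs

theorem exists_nonneg_one_add_mul_le {τstar τ : ℝ} (hτ : τstar < τ) :
    ∃ α : ℝ, 0 ≤ α ∧ (1 + α) * τstar ≤ α * τ := by
  rcases le_or_gt τstar 0 with h | h
  · exact ⟨0, le_rfl, by linarith⟩
  · refine ⟨τstar / (τ - τstar), div_nonneg h.le (sub_nonneg.2 hτ.le), le_of_eq ?_⟩
    field_simp [(sub_pos.2 hτ).ne']
    ring

theorem indicator_exp_mul_le {g : ℝ → ℝ} {a b α τ τstar t N : ℝ} (ha : 0 < a) (hb : 0 < b)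
    (hN : 0 ≤ N) (hα0 : 0 ≤ α) (hα : (1 + α) * τstar ≤ α * τ) (h : g a ≤ g b + N * τstar - t) :
    (Ioi 0).indicator (fun s => exp ((1 + α) * g s)) a ≤ exp (α * τ * N) * exp (-(1 + α) * t) *
      (Ioi 0).indicator (fun s => exp ((1 + α) * g s)) b := by
  rw [indicator_of_mem (mem_Ioi.2 ha), indicator_of_mem (mem_Ioi.2 hb), ← exp_add, ← exp_add]
  refine exp_le_exp.2 ?_
  nlinarith [mul_le_mul_of_nonneg_left hα hN, mul_le_mul_of_nonneg_left h (by linarith : 0 ≤ 1 + α)]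

/-- (Liu–Tanwani–Liberzon conditions.) Nonlinear multiple Lyapunov conditions with
gain `χ` and rate `ρ`: if `τ* = sup_{s>0} ∫_s^{χ(s)} dr/Ψ_ε(r)` is finite then the
switched system is `τ`-UGB for every `τ > τ*`. -/
theorem nonlinear_lyapunov_implies_tauUGB {m n : ℕ}
    (f : Fin m → EuclideanSpace ℝ (Fin n) → EuclideanSpace ℝ (Fin n))
    (F : WellPosed f)
    (V : Fin m → EuclideanSpace ℝ (Fin n) → ℝ) (α₁ α₂ ρfun χ : ℝ → ℝ) (ε τstar : ℝ)
    (hV : ∀ i, Lip0 (V i)) (hα₁ : IsClassKInf α₁) (hα₂ : IsClassKInf α₂)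
    (hρ : IsClassK ρfun) (hχ : IsClassKInf χ) (hε : 0 < ε)
    (hsand : ∀ i x, α₁ ‖x‖ ≤ V i x ∧ V i x ≤ α₂ ‖x‖)
    (hdec : ∀ i x, dini (F.Φ i) (V i) x ≤ ((-(ρfun (V i x)) : ℝ) : EReal))
    (hjump : ∀ i j x, V i x ≤ χ (V j x))
    (hsup : ∀ s : ℝ, 0 < s → (∫ r in s..(χ s), (Psi ε ρfun r)⁻¹) ≤ τstar) :
    ∀ τ : ℝ, τstar < τ → TauUGB f τ := by
  intro τ hτ
  obtain ⟨α, hα0, hα⟩ := exists_nonneg_one_add_mul_le hτ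
  set E := (Ioi 0).indicator fun s => exp ((1 + α) * integralInvPsi ε ρfun s)
  have hE : IsClassKInf E := isClassKInf_indicator_exp_integralInvPsi hε hρ (by linarith)
  obtain ⟨η₁, hη₁, hη₁E⟩ := (hE.comp hα₁).exists_leftInverse
  refine ⟨η₁, E ∘ α₂, α, hη₁, hE.comp hα₂, hα0, fun σ x hx t ht => ?_⟩
  have hpos : ∀ y : EuclideanSpace ℝ (Fin n), y ≠ 0 → 0 < α₁ ‖y‖ := fun y hy =>
    hα₁.1.pos (norm_pos_iff.2 hy)
  have hVpos : ∀ i y, y ≠ 0 → 0 < V i y := fun i y hy => (hpos y hy).trans_le (hsand i y).1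
  have hrhs : 0 ≤ exp (α * τ * Nsw σ 0 t) * exp (-(1 + α) * t) * (E ∘ α₂) ‖x 0‖ :=
    mul_nonneg (by positivity) ((hE.comp hα₂).1.nonneg (norm_nonneg _))
  rcases eq_or_ne (x t) 0 with hxt | hxt
  · simpa [hxt] using hη₁.1.nonneg hrhs
  obtain ⟨hx0, hbound⟩ := F.integralInvPsi_le_of_isSolution hε hρ hχ.1
    (fun i y hy => (hV i).continuousAt hy) hVpos hdec hjump hsup hx ht hxt
  have hmono := (integralInvPsi_strictMonoOn hε hρ).monotoneOn
  have hlower := hmono (hpos _ hxt) (hVpos _ _ hxt) (hsand (σ.toFun t) (x t)).1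
  have hupper := hmono (hVpos _ _ hx0) ((hVpos _ _ hx0).trans_le (hsand (σ.toFun 0) (x 0)).2)
    (hsand (σ.toFun 0) (x 0)).2
  rw [← hη₁E _ (norm_nonneg _)]
  exact hη₁.1.2.2.monotoneOn ((hE.comp hα₁).1.nonneg (norm_nonneg _)) hrhs
    (indicator_exp_mul_le (hpos _ hxt) (hα₂.1.pos (norm_pos_iff.2 hx0)) (Nat.cast_nonneg _) hα0
      hα (by linarith))
end
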